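/- (Hilbert 90 for Witt vector units.) Let L/K be a finite cyclic Galois extension with Galois group generated by σ, acting on W_n(L) componentwise. For x ∈ W_n(L)^×, the norm ∏_{g ∈ Gal(L/K)} g(x) equals 1 in W_n(L)^× if and only if there exists y ∈ W_n(L)^× with x = y·σ(y)^{-1}. -/

import Mathlib

noncomputable section

open WittVector

/-- Componentwise map on truncated Witt vectors induced by a ring homomorphism. -/
noncomputable def TruncatedWittVector.mapRingHom (p n : ℕ) [hp : Fact p.Prime]
    {R S : Type*} [CommRing R] [CommRing S] (f : R →+* S) :
    TruncatedWittVector p n R →+* TruncatedWittVector p n S :=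
  RingHom.liftOfRightInverse (WittVector.truncate n) TruncatedWittVector.out
    (fun x => x.truncateFun_out)
    ⟨(WittVector.truncate n).comp (WittVector.map f), by
      intro x hx
      rw [RingHom.mem_ker] at hx ⊢
      rw [RingHom.comp_apply, ← RingHom.mem_ker, WittVector.mem_ker_truncate]
      rw [← RingHom.mem_ker, WittVector.mem_ker_truncate] at hx
      intro i hi
      rw [WittVector.map_coeff, hx i hi, map_zero]⟩

/-- The map `𝔮 x = F(x) · x⁻¹` on the unit group of truncated Witt vectors,
where `F` is the (componentwise `p`-th power) Frobenius. -/
noncomputable def wittQ (p n : ℕ) [Fact p.Prime] (R : Type*) [CommRing R] [CharP R p] :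
    (TruncatedWittVector p n R)ˣ →* (TruncatedWittVector p n R)ˣ :=
  (Units.map (TruncatedWittVector.mapRingHom p n (frobenius R p)).toMonoidHom) /
    (MonoidHom.id _)

/-- The map `𝔮 x = F(x) · x⁻¹` on the unit group of (full) Witt vectors. -/
noncomputable def wittQFull (p : ℕ) [Fact p.Prime] (R : Type*) [CommRing R] [CharP R p] :
    (WittVector p R)ˣ →* (WittVector p R)ˣ :=
  (Units.map (WittVector.map (frobenius R p)).toMonoidHom) / (MonoidHom.id _)

/-- The unit-group homomorphism `W_n(K)ˣ → W_n(L)ˣ` induced by an algebra map. -/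
noncomputable def wittIncl (p n : ℕ) [Fact p.Prime] (K L : Type*) [CommRing K] [CommRing L]
    [Algebra K L] : (TruncatedWittVector p n K)ˣ →* (TruncatedWittVector p n L)ˣ :=
  Units.map (TruncatedWittVector.mapRingHom p n (algebraMap K L)).toMonoidHom

/-- The subfield `K(y₀, …, y_{n-1})` of `Ω` generated over `K` by the components of a
truncated Witt vector `y` over `Ω`. -/
noncomputable def wittGenField (p n : ℕ) (K Ω : Type*) [Field K] [Field Ω] [Algebra K Ω]
    (y : TruncatedWittVector p n Ω) : IntermediateField K Ω :=
  IntermediateField.adjoin K (Set.range fun i => y.coeff i)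

/-!
For a cyclic group `G = ⟨σ⟩`, an element `x` of norm one defines the 1-cocycle
`σ ^ k ↦ x · σ x ⋯ σ ^ (k - 1) x`, and if this is the coboundary of `β` then `x = σ β / β`.
So it suffices that every 1-cocycle `Gal(L/K) → Wₙ(L)ˣ` is a coboundary, which follows by
induction on `n`. The truncation `W_{m+1}(L)ˣ → W_m(L)ˣ` is onto, and for `m ≥ 1` its kernel is
`1 + V^m L`, isomorphic to the additive group of `L` because `V^m a · V^m b = V^{2m}(…)` vanishes in
length `m + 1`; additive Hilbert 90 kills the cocycles with values in it. For `n = 1`,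
`W₁(L)ˣ = Lˣ` and multiplicative Hilbert 90 applies.
-/

open groupCohomology Finset

section Cohomology

variable {G M : Type*} [Group G] [CommGroup M] [MulDistribMulAction G M]

theorem isMulCoboundary₁_of_surjective {M' : Type*} [CommGroup M'] [MulDistribMulAction G M']
    (π : M →* M') (hπ : Function.Surjective π) (hπG : ∀ (g : G) (m : M), π (g • m) = g • π m)
    (hM' : ∀ f : G → M', IsMulCocycle₁ f → IsMulCoboundary₁ f)
    (hker : ∀ f : G → M, IsMulCocycle₁ f → (∀ g, π (f g) = 1) → IsMulCoboundary₁ f)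
    {f : G → M} (hf : IsMulCocycle₁ f) : IsMulCoboundary₁ f := by
  obtain ⟨β', hβ'⟩ := hM' (π ∘ f) fun g h => by simp [hf g h, hπG]
  obtain ⟨β, rfl⟩ := hπ β'
  have hcocycle : IsMulCocycle₁ fun g => f g / (g • β / β) := fun g h => by
    dsimp only
    rw [hf g h, mul_smul, smul_div', smul_div', div_mul_div_comm, div_mul_div_cancel]
  obtain ⟨γ, hγ⟩ := hker _ hcocycle fun g => by rw [map_div, map_div, hπG, hβ' g]; simp
  exact ⟨γ * β, fun g => by rw [smul_mul', mul_div_mul_comm, hγ g, div_mul_cancel]⟩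

theorem prod_range_add_pow_smul (σ : G) (x : M) (s t : ℕ) :
    ∏ j ∈ range (s + t), (σ ^ j) • x
      = (∏ j ∈ range s, (σ ^ j) • x) * σ ^ s • ∏ j ∈ range t, (σ ^ j) • x := by
  simp only [prod_range_add, smul_prod', ← mul_smul, pow_add]

theorem prod_range_pow_smul_congr {σ : G} {x : M}
    (hx : ∏ j ∈ range (orderOf σ), (σ ^ j) • x = 1) {s t : ℕ} (h : σ ^ s = σ ^ t) :
    ∏ j ∈ range s, (σ ^ j) • x = ∏ j ∈ range t, (σ ^ j) • x := by
  have hmultiple (k : ℕ) : ∏ j ∈ range (orderOf σ * k), (σ ^ j) • x = 1 := by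
    induction k with
    | zero => simp
    | succ k ih => rw [mul_add_one, prod_range_add_pow_smul, ih, hx, smul_one, one_mul]
  have hmod (s : ℕ) :
      ∏ j ∈ range s, (σ ^ j) • x = ∏ j ∈ range (s % orderOf σ), (σ ^ j) • x := by
    conv_lhs => rw [← Nat.mod_add_div s (orderOf σ)]
    rw [prod_range_add_pow_smul, hmultiple, smul_one, mul_one]
  rw [hmod s, hmod t, pow_eq_pow_iff_modEq.1 h]

variable [Fintype G]

theorem prod_smul_mul_inv_smul_eq_one (σ : G) (y : M) : ∏ g : G, g • (y * (σ • y)⁻¹) = 1 := by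
  simp only [smul_mul', smul_inv', ← mul_smul, prod_mul_distrib, prod_inv_distrib]
  rw [Fintype.prod_equiv (Equiv.mulRight σ) (fun g => (g * σ) • y) (fun g => g • y) fun _ => rfl,
    mul_inv_cancel]

theorem prod_eq_prod_range_orderOf {N : Type*} [CommMonoid N] {σ : G}
    (hσ : ∀ g, g ∈ Subgroup.zpowers σ) (φ : G → N) :
    ∏ g, φ g = ∏ j ∈ range (orderOf σ), φ (σ ^ j) := by
  rw [← Fin.prod_univ_eq_prod_range (fun j => φ (σ ^ j))]
  refine (Fintype.prod_bijective (fun j : Fin (orderOf σ) => σ ^ (j : ℕ)) ⟨?_, ?_⟩ _ _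
    fun _ => rfl).symm
  · exact fun i j h => Fin.ext (pow_injOn_Iio_orderOf i.2 j.2 h)
  · intro g
    obtain ⟨k, rfl⟩ := mem_powers_iff_mem_zpowers.2 (hσ g)
    exact ⟨⟨k % orderOf σ, Nat.mod_lt _ (orderOf_pos σ)⟩, pow_mod_orderOf σ k⟩

theorem exists_eq_mul_inv_smul_of_prod_smul_eq_one {σ : G} (hσ : ∀ g, g ∈ Subgroup.zpowers σ)
    (hM : ∀ f : G → M, IsMulCocycle₁ f → IsMulCoboundary₁ f) {x : M} (hx : ∏ g : G, g • x = 1) :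
    ∃ y, x = y * (σ • y)⁻¹ := by
  set F : ℕ → M := fun s => ∏ j ∈ range s, (σ ^ j) • x
  have hFadd (s t : ℕ) : F (s + t) = F s * σ ^ s • F t := prod_range_add_pow_smul σ x s t
  have hF {s t : ℕ} : σ ^ s = σ ^ t → F s = F t :=
    prod_range_pow_smul_congr ((prod_eq_prod_range_orderOf hσ _).symm.trans hx)
  have hpow (g : G) : ∃ k : ℕ, σ ^ k = g := mem_powers_iff_mem_zpowers.2 (hσ g)
  choose ι hι using hpow
  have hcocycle : IsMulCocycle₁ fun g => F (ι g) := fun g h => by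
    change F _ = g • F _ * F _
    rw [hF (t := ι g + ι h) (by rw [pow_add, hι, hι, hι]), hFadd, hι, mul_comm]
  obtain ⟨β, hβ⟩ := hM _ hcocycle
  have hσβ : σ • β / β = x := by
    rw [hβ σ]
    change F _ = x
    rw [hF (t := 1) (by rw [hι, pow_one])]
    simp [F]
  exact ⟨β⁻¹, by rw [smul_inv', inv_inv, ← hσβ, div_eq_mul_inv, mul_comm]⟩

end Cohomology

theorem isCoboundary₁_of_isCocycle₁_of_aut {K L : Type*} [Field K] [Field L] [Algebra K L]
    [FiniteDimensional K L] (f : (L ≃ₐ[K] L) → L) (hf : IsCocycle₁ f) : IsCoboundary₁ f := by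
  obtain ⟨z, hz⟩ : ∃ z : L, ∑ h : L ≃ₐ[K] L, h z ≠ 0 := by
    obtain ⟨z, hz⟩ := not_forall.1 fun H => Hilbert90.aux_ne_zero (1 : (L ≃ₐ[K] L) → Lˣ) (funext H)
    exact ⟨z, by simpa [Hilbert90.aux, Finsupp.linearCombination, Finsupp.sum_fintype] using hz⟩
  have hreindex (g : L ≃ₐ[K] L) (φ : (L ≃ₐ[K] L) → L) : ∑ h, φ (g * h) = ∑ h, φ h :=
    Fintype.sum_equiv (Equiv.mulLeft g) _ _ fun _ => rfl
  set t := ∑ h : L ≃ₐ[K] L, h z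
  have ht (g : L ≃ₐ[K] L) : g t = t := by
    simp only [t, map_sum]
    exact hreindex g fun h => h z
  have hfg (g h : L ≃ₐ[K] L) : g (f h) = f (g * h) - f g := by
    rw [hf g h, AlgEquiv.smul_def, add_sub_cancel_right]
  refine ⟨-(t⁻¹ * ∑ h, f h * h z), fun g => ?_⟩
  have hsum : g (∑ h, f h * h z) = ∑ h, f h * h z - f g * t := by
    simp only [map_sum, map_mul, hfg, sub_mul, sum_sub_distrib, ← mul_sum, ← AlgEquiv.mul_apply]
    rw [hreindex g fun h => f h * h z, hreindex g fun h => h z]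
  rw [AlgEquiv.smul_def, map_neg, map_mul, map_inv₀, ht, hsum]
  field_simp
  ring

namespace TruncatedWittVector

variable {p n : ℕ} {R S : Type*} [CommRing R] [CommRing S]

def single (i : Fin n) (b : R) : TruncatedWittVector p n R :=
  mk p (Pi.single i b)

theorem coeff_single (i j : Fin n) (b : R) :
    (single i b : TruncatedWittVector p n R).coeff j = (Pi.single i b : Fin n → R) j :=
  coeff_mk _ _

theorem single_injective (i : Fin n) :
    Function.Injective (single i : R → TruncatedWittVector p n R) := fun a b h => by
  simpa [coeff_single] using congrArg (coeff i) h

variable [Fact p.Prime]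

theorem single_zero (i : Fin n) : (single i 0 : TruncatedWittVector p n R) = 0 :=
  ext fun j => by rw [coeff_single, Pi.single_zero, Pi.zero_apply, coeff_zero]

theorem mapRingHom_truncate (f : R →+* S) (w : WittVector p R) :
    mapRingHom p n f (WittVector.truncate n w) = WittVector.truncate n (WittVector.map f w) :=
  RingHom.liftOfRightInverse_comp_apply _ _ _ _ _

theorem coeff_mapRingHom (f : R →+* S) (x : TruncatedWittVector p n R) (i : Fin n) :
    (mapRingHom p n f x).coeff i = f (x.coeff i) := by
  obtain ⟨w, rfl⟩ := WittVector.truncate_surjective p n R x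
  rw [mapRingHom_truncate, WittVector.coeff_truncate, WittVector.coeff_truncate, map_coeff]

section Action

variable {G : Type*} [Monoid G] [MulSemiringAction G R]

instance : MulSemiringAction G (TruncatedWittVector p n R) where
  smul g := mapRingHom p n (MulSemiringAction.toRingHom G R g)
  one_smul x := ext fun i => by
    change (mapRingHom _ _ _ x).coeff i = _
    rw [coeff_mapRingHom]
    exact one_smul G _
  mul_smul g h x := ext fun i => by
    change (mapRingHom _ _ _ x).coeff i = (mapRingHom _ _ _ (mapRingHom _ _ _ x)).coeff i
    rw [coeff_mapRingHom, coeff_mapRingHom, coeff_mapRingHom]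
    exact mul_smul g h _
  smul_zero g := map_zero _
  smul_add g := map_add _
  smul_one g := map_one _
  smul_mul g := map_mul _

theorem coeff_smul (g : G) (x : TruncatedWittVector p n R) (i : Fin n) :
    (g • x).coeff i = g • x.coeff i :=
  coeff_mapRingHom _ _ _

/-- For `G = L ≃ₐ[K] L`, `g • u` is by definition `Units.map (mapRingHom p n g) u`. -/
instance : MulDistribMulAction G (TruncatedWittVector p n R)ˣ := Units.mulDistribMulActionRight

theorem coe_smul_units (g : G) (u : (TruncatedWittVector p n R)ˣ) :
    ((g • u : (TruncatedWittVector p n R)ˣ) : TruncatedWittVector p n R) = g • (u : _) :=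
  rfl

theorem truncate_smul {m : ℕ} (hm : m ≤ n) (g : G) (x : TruncatedWittVector p n R) :
    truncate hm (g • x) = g • truncate hm x :=
  ext fun i => by simp only [coeff_truncate, coeff_smul]

theorem smul_single (g : G) (i : Fin n) (b : R) :
    g • (single i b : TruncatedWittVector p n R) = single i (g • b) :=
  ext fun j => by
    rw [coeff_smul, coeff_single, coeff_single]
    rcases eq_or_ne j i with rfl | hj
    · simp
    · simp [hj]

end Action

section Units

def constantCoeff : TruncatedWittVector p (n + 1) R →+* R where
  toFun x := x.coeff 0
  map_one' := by
    rw [← map_one (WittVector.truncate (p := p) (R := R) (n + 1)), WittVector.coeff_truncate]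
    exact one_coeff_zero p R
  map_mul' x y := by
    obtain ⟨a, rfl⟩ := WittVector.truncate_surjective p (n + 1) R x
    obtain ⟨b, rfl⟩ := WittVector.truncate_surjective p (n + 1) R y
    simp only [← map_mul, WittVector.coeff_truncate]
    exact mul_coeff_zero a b
  map_zero' := coeff_zero p (n + 1) R 0
  map_add' x y := by
    obtain ⟨a, rfl⟩ := WittVector.truncate_surjective p (n + 1) R x
    obtain ⟨b, rfl⟩ := WittVector.truncate_surjective p (n + 1) R y
    simp only [← map_add, WittVector.coeff_truncate]
    exact add_coeff_zero a b

variable {k : Type*} [Field k] [CharP k p]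

theorem isUnit_iff_coeff_zero_ne_zero (x : TruncatedWittVector p (n + 1) k) :
    IsUnit x ↔ x.coeff 0 ≠ 0 := by
  refine ⟨fun hx => (TruncatedWittVector.constantCoeff.isUnit_map hx).ne_zero, fun hx => ?_⟩
  have hout : WittVector.truncate (n + 1) x.out = x := ext fun i => by
    rw [WittVector.coeff_truncate, coeff_out]
  rw [← hout]
  exact (WittVector.isUnit_of_coeff_zero_ne_zero _ (by rwa [← coeff_out x 0] at hx)).map _

theorem surjective_units_map_truncate {m : ℕ} (h : n + 1 ≤ m + 1) :
    Function.Surjective (Units.map (truncate (p := p) (R := k) h).toMonoidHom) := by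
  intro u
  obtain ⟨w, hw⟩ := truncate_surjective h (u : TruncatedWittVector p (n + 1) k)
  have hw0 : w.coeff 0 ≠ 0 := by
    have hu := (isUnit_iff_coeff_zero_ne_zero _).1 u.isUnit
    rwa [← hw, coeff_truncate] at hu
  obtain ⟨v, rfl⟩ := (isUnit_iff_coeff_zero_ne_zero w).2 hw0
  exact ⟨v, Units.ext hw⟩

end Units

section Verschiebung

variable (m : ℕ)

theorem truncate_iterate_verschiebung (w : WittVector p R) :
    WittVector.truncate (m + 1) (verschiebung^[m] w) = single (Fin.last m) (w.coeff 0) :=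
  ext fun i => by
    rw [WittVector.coeff_truncate, coeff_single]
    rcases (Fin.le_last i).lt_or_eq with hi | rfl
    · rw [iterate_verschiebung_coeff_eq_zero _ (show (i : ℕ) < m from hi),
        Pi.single_eq_of_ne hi.ne]
    · rw [Pi.single_eq_same, Fin.val_last, ← iterate_verschiebung_coeff w m 0, zero_add]

theorem single_last_add (a b : R) :
    (single (Fin.last m) (a + b) : TruncatedWittVector p (m + 1) R) =
      single (Fin.last m) a + single (Fin.last m) b := by
  have h := truncate_iterate_verschiebung m (teichmuller p a + teichmuller p b)
  rw [iterate_map_add, map_add, truncate_iterate_verschiebung, truncate_iterate_verschiebung,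
    add_coeff_zero, teichmuller_coeff_zero, teichmuller_coeff_zero] at h
  exact h.symm

theorem eq_single_last_of_truncate_eq_zero {x : TruncatedWittVector p (m + 1) R}
    (hx : truncate (Nat.le_succ m) x = 0) : x = single (Fin.last m) (x.coeff (Fin.last m)) :=
  ext fun i => by
    rw [coeff_single]
    rcases (Fin.le_last i).lt_or_eq with hi | rfl
    · rw [Pi.single_eq_of_ne hi.ne]
      simpa [coeff_truncate] using congrArg (coeff ⟨i, hi⟩) hx
    · rw [Pi.single_eq_same]

variable [CharP R p] {m}

/-- `V^m a · V^m b = V^{2m}(…)`, which vanishes in length `m + 1 ≤ 2m`. -/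
theorem single_last_mul_single_last (hm : 0 < m) (a b : R) :
    (single (Fin.last m) a * single (Fin.last m) b : TruncatedWittVector p (m + 1) R) = 0 := by
  rw [← teichmuller_coeff_zero p a, ← teichmuller_coeff_zero p b,
    ← truncate_iterate_verschiebung, ← truncate_iterate_verschiebung, ← map_mul,
    iterate_verschiebung_mul]
  exact ext fun i => by
    rw [WittVector.coeff_truncate, coeff_zero, iterate_verschiebung_coeff_eq_zero]
    omega

theorem one_add_single_last_mul (hm : 0 < m) (a b : R) :
    (1 + single (Fin.last m) a) * (1 + single (Fin.last m) b : TruncatedWittVector p (m + 1) R) =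
      1 + single (Fin.last m) (a + b) := by
  rw [single_last_add]
  linear_combination single_last_mul_single_last hm a b

end Verschiebung

theorem isMulCoboundary₁_of_truncate_eq_one [CharP R p] {G : Type*} [Group G]
    [MulSemiringAction G R] (hR : ∀ a : G → R, IsCocycle₁ a → IsCoboundary₁ a) {m : ℕ}
    (hm : 0 < m) {f : G → (TruncatedWittVector p (m + 1) R)ˣ} (hf : IsMulCocycle₁ f)
    (h1 : ∀ g, truncate (Nat.le_succ m) (f g : TruncatedWittVector p (m + 1) R) = 1) :
    IsMulCoboundary₁ f := by
  set s : R → TruncatedWittVector p (m + 1) R := single (Fin.last m)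
  set a : G → R := fun g => ((f g : TruncatedWittVector p (m + 1) R) - 1).coeff (Fin.last m)
  have hfa (g : G) : (f g : TruncatedWittVector p (m + 1) R) = 1 + s (a g) :=
    eq_add_of_sub_eq' <| eq_single_last_of_truncate_eq_zero m <| by
      rw [map_sub, map_one, h1, sub_self]
  have hsmul (g : G) (b : R) : g • (1 + s b) = 1 + s (g • b) := by
    rw [smul_add, smul_one, smul_single]
  obtain ⟨b, hb⟩ := hR a fun g h => single_injective (p := p) _ <| add_left_cancel (a := 1) <| by
    rw [← hfa, hf g h, Units.val_mul, coe_smul_units, hfa, hfa, hsmul, one_add_single_last_mul hm]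
  let y : (TruncatedWittVector p (m + 1) R)ˣ :=
    ⟨1 + s b, 1 + s (-b), by rw [one_add_single_last_mul hm, add_neg_cancel, single_zero, add_zero],
      by rw [one_add_single_last_mul hm, neg_add_cancel, single_zero, add_zero]⟩
  refine ⟨y, fun g => div_eq_of_eq_mul' (Units.ext ?_)⟩
  rw [Units.val_mul, coe_smul_units]
  change g • (1 + s b) = (1 + s b) * (f g : TruncatedWittVector p (m + 1) R)
  rw [hsmul, hfa, one_add_single_last_mul hm, ← hb g, add_sub_cancel]

theorem isMulCoboundary₁_of_isMulCocycle₁_of_aut {K L : Type*} [Field K] [Field L] [Algebra K L]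
    [FiniteDimensional K L] [CharP L p] :
    ∀ {n : ℕ} (f : (L ≃ₐ[K] L) → (TruncatedWittVector p n L)ˣ),
      IsMulCocycle₁ f → IsMulCoboundary₁ f
  | 0, _, _ => ⟨1, fun _ => Units.ext <| ext fun i => i.elim0⟩
  | 1, f, hf => by
    set φ := Units.map (TruncatedWittVector.constantCoeff (p := p) (n := 0) (R := L)).toMonoidHom
    have hφ (u : (TruncatedWittVector p 1 L)ˣ) :
        (φ u : L) = (u : TruncatedWittVector p 1 L).coeff 0 :=
      rfl
    refine isMulCoboundary₁_of_surjective φ (fun β => ?_) (fun g u => Units.ext ?_)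
      isMulCoboundary₁_of_isMulCocycle₁_of_aut_to_units (fun f' _ hf' => ⟨1, fun g => ?_⟩) hf
    · obtain ⟨v, hv⟩ := (isUnit_iff_coeff_zero_ne_zero (mk p fun _ : Fin 1 => (β : L))).2
        (by rw [coeff_mk]; exact β.ne_zero)
      exact ⟨v, Units.ext (by rw [hφ, hv, coeff_mk])⟩
    · rw [hφ, coe_smul_units, coeff_smul, AlgEquiv.smul_units_def, Units.coe_map]
      rfl
    · rw [smul_one, div_one, eq_comm]
      refine Units.ext (ext fun i => ?_)
      rw [Fin.eq_zero i, ← hφ, hf' g]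
      exact (map_one TruncatedWittVector.constantCoeff).symm
  | m + 2, f, hf =>
    isMulCoboundary₁_of_surjective
      (Units.map (truncate (p := p) (R := L) (Nat.le_succ (m + 1))).toMonoidHom)
      (surjective_units_map_truncate _)
      (fun g u => Units.ext (by
        rw [Units.coe_map, coe_smul_units, coe_smul_units, Units.coe_map]
        exact truncate_smul _ g _))
      isMulCoboundary₁_of_isMulCocycle₁_of_aut
      (fun _ hf' h1 => isMulCoboundary₁_of_truncate_eq_one isCoboundary₁_of_isCocycle₁_of_aut
        m.succ_pos hf' fun g => congrArg Units.val (h1 g)) hf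

end TruncatedWittVector

theorem stmt_5_general (p n : ℕ) [Fact p.Prime] (K L : Type*) [Field K] [CharP K p]
    [Field L] [Algebra K L] [FiniteDimensional K L]
    [Fintype (L ≃ₐ[K] L)]
    (σ : L ≃ₐ[K] L) (hσ : ∀ g : L ≃ₐ[K] L, g ∈ Subgroup.zpowers σ)
    (x : (TruncatedWittVector p n L)ˣ) :
    (∏ g : L ≃ₐ[K] L,
        Units.map (TruncatedWittVector.mapRingHom p n
          (RingHomClass.toRingHom g)).toMonoidHom x) = 1 ↔
      ∃ y : (TruncatedWittVector p n L)ˣ,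
        x = y * (Units.map (TruncatedWittVector.mapRingHom p n
          (RingHomClass.toRingHom σ)).toMonoidHom y)⁻¹ := by
  have : CharP L p := charP_of_injective_algebraMap (algebraMap K L).injective p
  refine ⟨exists_eq_mul_inv_smul_of_prod_smul_eq_one hσ
    TruncatedWittVector.isMulCoboundary₁_of_isMulCocycle₁_of_aut, ?_⟩
  rintro ⟨y, rfl⟩
  exact prod_smul_mul_inv_smul_eq_one σ y

/--
**Hilbert 90 for Witt vector units.** Let `L/K` be a finite cyclic Galois
extension with Galois group generated by `σ`, acting on `Wₙ(L)` componentwise. For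
`x ∈ Wₙ(L)ˣ`, the norm `∏_{g ∈ Gal(L/K)} g(x)` equals `1` if and only if there exists
`y ∈ Wₙ(L)ˣ` with `x = y·σ(y)⁻¹`.
-/
theorem stmt_5 (p n : ℕ) [Fact p.Prime] (K L : Type*) [Field K] [CharP K p]
    [Field L] [Algebra K L] [FiniteDimensional K L] [IsGalois K L]
    [Fintype (L ≃ₐ[K] L)]
    (σ : L ≃ₐ[K] L) (hσ : ∀ g : L ≃ₐ[K] L, g ∈ Subgroup.zpowers σ)
    (x : (TruncatedWittVector p n L)ˣ) :
    (∏ g : L ≃ₐ[K] L,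
        Units.map (TruncatedWittVector.mapRingHom p n
          (RingHomClass.toRingHom g)).toMonoidHom x) = 1 ↔
      ∃ y : (TruncatedWittVector p n L)ˣ,
        x = y * (Units.map (TruncatedWittVector.mapRingHom p n
          (RingHomClass.toRingHom σ)).toMonoidHom y)⁻¹ :=
  stmt_5_general p n K L σ hσ x
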